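/- Let x ∈ A^ℤ be a bi-infinite word and φ : A* → B* a return morphism for a nonempty word w. If Γ = [n, n+k] (an integer interval) is a string attractor of φ(x), then there exist m ∈ ℤ and ℓ ≥ 0 such that φ_x^{-1}(Γ) = [m, m+ℓ], and the interval [m, m+ℓ+|w|] is a string attractor of x. -/

import Mathlib

open scoped ENat Classical

/-- The length-`n` factor of the bi-infinite word `x` starting at position `i`. -/
def subwordZ {A : Type*} (x : ℤ → A) (i : ℤ) (n : ℕ) : List A :=
  (List.range n).map fun j => x (i + (j : ℤ))

/-- `w` occurs in `x` at position `i`. -/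
def occursAt {A : Type*} (x : ℤ → A) (w : List A) (i : ℤ) : Prop :=
  subwordZ x i w.length = w

/-- `w` is a factor of the bi-infinite word `x`. -/
def IsFactorZ {A : Type*} (x : ℤ → A) (w : List A) : Prop :=
  ∃ i : ℤ, occursAt x w i

/-- `Γ` is a string attractor of the bi-infinite word `x`: every nonempty factor
has an occurrence crossing a position of `Γ`. -/
def IsAttractorZ {A : Type*} (x : ℤ → A) (Γ : Set ℤ) : Prop :=
  ∀ w : List A, w ≠ [] → IsFactorZ x w →
    ∃ i : ℤ, occursAt x w i ∧ ∃ p ∈ Γ, i ≤ p ∧ p < i + (w.length : ℤ)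

/-- The span `sup Γ - inf Γ` of a set of integers (`⊤` when unbounded). -/
noncomputable def setSpan (Γ : Set ℤ) : ℕ∞ :=
  ⨆ a ∈ Γ, ⨆ b ∈ Γ, ((b - a).toNat : ℕ∞)

/-- The string attractor span of a bi-infinite word. -/
noncomputable def wordSpan {A : Type*} (x : ℤ → A) : ℕ∞ :=
  ⨅ Γ ∈ {Γ : Set ℤ | IsAttractorZ x Γ}, setSpan Γ

/-- The factor complexity of a bi-infinite word. -/
noncomputable def complexityZ {A : Type*} (x : ℤ → A) (n : ℕ) : ℕ :=
  Nat.card {w : List A // w.length = n ∧ IsFactorZ x w}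

/-- The shift `S^k`. -/
def shiftZ {A : Type*} (k : ℤ) (x : ℤ → A) : ℤ → A := fun i => x (i + k)

def PositivelyPeriodicZ {A : Type*} (x : ℤ → A) : Prop :=
  ∃ (N : ℤ) (p : ℕ), 1 ≤ p ∧ ∀ n : ℤ, N ≤ n → x n = x (n + (p : ℤ))

def NegativelyPeriodicZ {A : Type*} (x : ℤ → A) : Prop :=
  ∃ (N : ℤ) (p : ℕ), 1 ≤ p ∧ ∀ n : ℤ, n ≤ N → x n = x (n - (p : ℤ))

def EventuallyPeriodicZ {A : Type*} (x : ℤ → A) : Prop :=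
  PositivelyPeriodicZ x ∨ NegativelyPeriodicZ x

def AperiodicZ {A : Type*} (x : ℤ → A) : Prop := ¬ EventuallyPeriodicZ x

def PurelyPeriodicZ {A : Type*} (x : ℤ → A) : Prop :=
  ∃ p : ℕ, 1 ≤ p ∧ ∀ n : ℤ, x n = x (n + (p : ℤ))

def LeftSpecialZ {A : Type*} (x : ℤ → A) (u : List A) : Prop :=
  ∃ a b : A, a ≠ b ∧ IsFactorZ x (a :: u) ∧ IsFactorZ x (b :: u)

def RightSpecialZ {A : Type*} (x : ℤ → A) (u : List A) : Prop :=
  ∃ a b : A, a ≠ b ∧ IsFactorZ x (u ++ [a]) ∧ IsFactorZ x (u ++ [b])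

def BispecialZ {A : Type*} (x : ℤ → A) (u : List A) : Prop :=
  LeftSpecialZ x u ∧ RightSpecialZ x u

/-- A bi-infinite word over `{0,1}` is Sturmian if it is aperiodic with complexity `n + 1`. -/
def SturmianZ (x : ℤ → Fin 2) : Prop :=
  AperiodicZ x ∧ ∀ n : ℕ, complexityZ x n = n + 1

/-- `x_{[-n, n+1]} = r_n(x) 01 l_n(x)` for all `n`. -/
def UpperCharacteristic (x : ℤ → Fin 2) : Prop :=
  SturmianZ x ∧ ∀ n : ℕ, ∃ r l : List (Fin 2),
    r.length = n ∧ RightSpecialZ x r ∧ l.length = n ∧ LeftSpecialZ x l ∧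
    subwordZ x (-(n : ℤ)) (2 * n + 2) = r ++ [0, 1] ++ l

/-- `x_{[-n, n+1]} = r_n(x) 10 l_n(x)` for all `n`. -/
def LowerCharacteristic (x : ℤ → Fin 2) : Prop :=
  SturmianZ x ∧ ∀ n : ℕ, ∃ r l : List (Fin 2),
    r.length = n ∧ RightSpecialZ x r ∧ l.length = n ∧ LeftSpecialZ x l ∧
    subwordZ x (-(n : ℤ)) (2 * n + 2) = r ++ [1, 0] ++ l

def CharacteristicSturmian (x : ℤ → Fin 2) : Prop :=
  UpperCharacteristic x ∨ LowerCharacteristic x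

def QuasiSturmianZ {A : Type*} (x : ℤ → A) : Prop :=
  AperiodicZ x ∧ ∃ (n₀ k : ℕ), 1 ≤ k ∧ ∀ n : ℕ, n₀ ≤ n → complexityZ x n = n + k

/-- Starting position in `φ(x)` of the image `φ(x_i)` (image of `x_0` starts at `0`). -/
def blockStart {A B : Type*} (φ : A → List B) (x : ℤ → A) (i : ℤ) : ℤ :=
  if 0 ≤ i then ((List.range i.toNat).map fun j => ((φ (x (j : ℤ))).length : ℤ)).sum
  else -((List.range (-i).toNat).map fun j => ((φ (x (-(j : ℤ) - 1))).length : ℤ)).sum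

/-- `y` is the image of the bi-infinite word `x` under the substitution `φ`
(with images of letters nonempty). -/
def IsSubstImage {A B : Type*} (φ : A → List B) (x : ℤ → A) (y : ℤ → B) : Prop :=
  (∀ a : A, φ a ≠ []) ∧
  ∀ i : ℤ, subwordZ y (blockStart φ x i) (φ (x i)).length = φ (x i)

/-- `φ_x(Γ)`: positions of `φ(x)` occupied by images of letters at positions in `Γ`. -/
def substSupp {A B : Type*} (φ : A → List B) (x : ℤ → A) (Γ : Set ℤ) : Set ℤ :=
  {n : ℤ | ∃ i ∈ Γ, blockStart φ x i ≤ n ∧ n < blockStart φ x i + ((φ (x i)).length : ℤ)}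

/-- `φ_x^{-1}(Γ)`: positions of letters of `x` whose image blocks in `φ(x)` meet `Γ`. -/
def substPreimage {A B : Type*} (φ : A → List B) (x : ℤ → A) (Γ : Set ℤ) : Set ℤ :=
  {i : ℤ | ∃ n ∈ Γ, blockStart φ x i ≤ n ∧ n < blockStart φ x i + ((φ (x i)).length : ℤ)}

/-- The set of occurrences of `w` in the finite word `u`. -/
def occSetF {B : Type*} (u w : List B) : Set ℕ :=
  {i : ℕ | i + w.length ≤ u.length ∧ (u.drop i).take w.length = w}

/-- `φ` is a return morphism for `w`. -/
def IsReturnMorphism {A B : Type*} (φ : A → List B) (w : List B) : Prop :=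
  w ≠ [] ∧ Function.Injective φ ∧ (∀ a : A, φ a ≠ []) ∧
  ∀ a : A, occSetF (w ++ φ a) w = {0, (φ a).length}

def listPow {A : Type*} (u : List A) : ℕ → List A
  | 0 => []
  | n + 1 => u ++ listPow u n

/-- A substitution on `{0,1}` is acyclic if `φ(0)` and `φ(1)` are not powers of one word. -/
def AcyclicSubst {A : Type*} (φ : Fin 2 → List A) : Prop :=
  ¬ ∃ (u : List A) (m n : ℕ), φ 0 = listPow u m ∧ φ 1 = listPow u n

/-- The substitution `L₀ : 0 ↦ 0, 1 ↦ 01`. -/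
def Lzero : Fin 2 → List (Fin 2) := fun a => if a = 0 then [0] else [0, 1]

/-- The substitution `L₁ : 0 ↦ 10, 1 ↦ 1`. -/
def Lone : Fin 2 → List (Fin 2) := fun a => if a = 0 then [1, 0] else [1]

/-- A finite word has period `r`. -/
def PeriodicF {A : Type*} (w : List A) (r : ℕ) : Prop :=
  ∀ i : ℕ, i + r < w.length → w[i]? = w[i + r]?

/-- `Γ` is a string attractor of the finite word `w`. -/
def IsAttractorF {A : Type*} (w : List A) (Γ : Set ℕ) : Prop :=
  ∀ u : List A, u ≠ [] → u <:+: w →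
    ∃ i : ℕ, i + u.length ≤ w.length ∧ (w.drop i).take u.length = u ∧
      ∃ p ∈ Γ, i ≤ p ∧ p < i + u.length

def RecurrentZ {A : Type*} (x : ℤ → A) : Prop :=
  ∀ w : List A, IsFactorZ x w → {i : ℤ | occursAt x w i}.Infinite

def UniformlyRecurrentZ {A : Type*} (x : ℤ → A) : Prop :=
  ∀ w : List A, IsFactorZ x w →
    ∃ n : ℕ, ∀ i : ℤ, ∃ j : ℤ, i ≤ j ∧ j + (w.length : ℤ) ≤ i + (n : ℤ) ∧ occursAt x w j

def ModuloRecurrentZ {A : Type*} (x : ℤ → A) : Prop :=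
  ∀ w : List A, IsFactorZ x w → ∀ k : ℕ, 1 ≤ k → ∀ r : ℤ,
    ∃ i : ℤ, occursAt x w i ∧ (k : ℤ) ∣ (i - r)

/-- A shift space: closed (product topology, `A` discrete) and shift-invariant. -/
def IsShiftSpace {A : Type*} (X : Set (ℤ → A)) : Prop :=
  @IsClosed _ (@Pi.topologicalSpace ℤ (fun _ => A) (fun _ => ⊥)) X ∧ shiftZ 1 '' X = X

def IsAttractorX {A : Type*} (X : Set (ℤ → A)) (Γ : Set ℤ) : Prop :=
  ∀ x ∈ X, IsAttractorZ x Γ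

def MinimalShift {A : Type*} (X : Set (ℤ → A)) : Prop :=
  IsShiftSpace X ∧ ∀ Y ⊆ X, IsShiftSpace Y → Y = ∅ ∨ Y = X

/-- The orbit closure of a bi-infinite word (product topology, `A` discrete). -/
def orbitClosureZ {A : Type*} (x : ℤ → A) : Set (ℤ → A) :=
  @closure _ (@Pi.topologicalSpace ℤ (fun _ => A) (fun _ => ⊥)) {y | ∃ k : ℤ, y = shiftZ k x}

/-! Because `w φ(a)` contains `w` only as a prefix and as a suffix, every block `φ(x_i)` of
`φ(x)` is preceded by an occurrence of `w`, every occurrence of `w` in `φ(x)` ends at a block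
boundary, and `φ` is a prefix code. So for a factor `u` of `x`, take an occurrence of the factor
`w φ(u)` of `φ(x)` crossing `Γ`: its prefix `w` ends at a boundary `j`, whence `u` occurs at `j`
in `x`, and the crossed position lies in a block `i ∈ φ_x⁻¹(Γ)` with `i < j + |u|` and
`j ≤ i + |w|`. -/

section Words

variable {A : Type*}

-- The ascription `(j : ℤ)` in `subwordZ` and `blockStart` coerces the list `List.range n` to a
-- `List ℤ` (elementwise, through `flatMap`); these lemmas unfold that coercion.
lemma subwordZ_eq_map (x : ℤ → A) (i : ℤ) (n : ℕ) :
    subwordZ x i n = (List.range n).map fun j : ℕ => x (i + j) := by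
  show List.map _ ((List.range n).flatMap fun a : ℕ => [((a : ℕ) : ℤ)]) = _
  rw [← List.map_eq_flatMap, List.map_map]
  rfl

@[simp]
lemma length_subwordZ (x : ℤ → A) (i : ℤ) (n : ℕ) : (subwordZ x i n).length = n := by
  simp [subwordZ_eq_map]

lemma subwordZ_add (x : ℤ → A) (i : ℤ) (a b : ℕ) :
    subwordZ x i (a + b) = subwordZ x i a ++ subwordZ x (i + a) b := by
  simp [subwordZ_eq_map, List.range_add, add_assoc]

@[simp]
lemma subwordZ_one (x : ℤ → A) (i : ℤ) : subwordZ x i 1 = [x i] := by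
  simp [subwordZ_eq_map]

lemma take_subwordZ (x : ℤ → A) (i : ℤ) {a b : ℕ} (h : a ≤ b) :
    (subwordZ x i b).take a = subwordZ x i a := by
  rw [subwordZ_eq_map, subwordZ_eq_map, ← List.map_take, List.take_range, min_eq_left h]

lemma occursAt_append_iff {x : ℤ → A} {s t : List A} {q : ℤ} :
    occursAt x (s ++ t) q ↔ occursAt x s q ∧ occursAt x t (q + s.length) := by
  rw [occursAt, List.length_append, subwordZ_add]
  constructor
  · exact fun h => List.append_inj h (length_subwordZ _ _ _)
  · rintro ⟨hs, ht⟩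
    rw [occursAt] at hs ht
    rw [hs, ht]

lemma occursAt.drop_take {x : ℤ → A} {v : List A} {q : ℤ} (h : occursAt x v q) {d e : ℕ}
    (hde : d + e ≤ v.length) : (v.drop d).take e = subwordZ x (q + d) e := by
  rw [← h, ← Nat.add_sub_cancel' (le_of_add_le_left hde), subwordZ_add,
    List.drop_left' (length_subwordZ _ _ _), take_subwordZ _ _ (by omega)]

lemma occursAt.prefix_of_length_le {x : ℤ → A} {s t : List A} {q : ℤ}
    (hs : occursAt x s q) (ht : occursAt x t q) (hst : s.length ≤ t.length) : s <+: t := by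
  rw [← hs, ← ht, ← take_subwordZ x q hst]
  exact List.take_prefix _ _

lemma occursAt_of_prefix_subwordZ {x : ℤ → A} {u : List A} {j : ℤ} {N : ℕ}
    (h : u <+: subwordZ x j N) : occursAt x u j := by
  have hN : u.length ≤ N := by simpa using h.length_le
  exact (take_subwordZ x j hN).symm.trans (List.prefix_iff_eq_take.1 h).symm

lemma IsAttractorZ.mono {x : ℤ → A} {Γ Γ' : Set ℤ} (h : IsAttractorZ x Γ) (hΓ : Γ ⊆ Γ') :
    IsAttractorZ x Γ' := fun u hu hf =>
  let ⟨i, hi, p, hp, hip⟩ := h u hu hf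
  ⟨i, hi, p, hΓ hp, hip⟩

end Words

namespace StrictMono

variable {f : ℤ → ℤ}

lemma sub_le_sub_apply (hf : StrictMono f) {i j : ℤ} (h : i ≤ j) : j - i ≤ f j - f i := by
  have hmono : Monotone fun n => f n - n :=
    monotone_int_of_le_succ fun n => by have := hf (lt_add_one n); omega
  have := hmono h
  simp only at this
  omega

lemma exists_mem_Ico_succ (hf : StrictMono f) (p : ℤ) : ∃ i, p ∈ Set.Ico (f i) (f (i + 1)) := by
  have hbdd : ∃ b, ∀ i, f i ≤ p → i ≤ b := by
    refine ⟨max 0 (p - f 0), fun i hi => ?_⟩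
    rcases le_total 0 i with h | h
    · have := hf.sub_le_sub_apply h
      omega
    · omega
  have hne : ∃ i, f i ≤ p := by
    refine ⟨min 0 (p - f 0), ?_⟩
    have := hf.sub_le_sub_apply (min_le_left 0 (p - f 0))
    omega
  obtain ⟨i, hi, hmax⟩ := Int.exists_greatest_of_bdd hbdd hne
  exact ⟨i, hi, not_le.1 fun h => by have := hmax _ h; omega⟩

end StrictMono

section Blocks

variable {A B : Type*} (φ : A → List B) (x : ℤ → A)

lemma blockStart_natCast (n : ℕ) :
    blockStart φ x n = ((List.range n).map fun j : ℕ => ((φ (x j)).length : ℤ)).sum := by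
  show (if _ then List.map _ ((List.range _).flatMap fun a : ℕ => [((a : ℕ) : ℤ)]) |>.sum
    else _) = _
  rw [if_pos (Int.natCast_nonneg n), ← List.map_eq_flatMap, List.map_map, Int.toNat_natCast]
  rfl

lemma blockStart_neg_natCast (n : ℕ) :
    blockStart φ x (-n) =
      -((List.range n).map fun j : ℕ => ((φ (x (-j - 1))).length : ℤ)).sum := by
  rcases Nat.eq_zero_or_pos n with rfl | hn
  · simpa using blockStart_natCast φ x 0
  show (if _ then _ else
    -(List.map _ ((List.range _).flatMap fun a : ℕ => [((a : ℕ) : ℤ)]) |>.sum)) = _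
  rw [if_neg (by omega), ← List.map_eq_flatMap, List.map_map, neg_neg, Int.toNat_natCast]
  rfl

lemma blockStart_succ (i : ℤ) :
    blockStart φ x (i + 1) = blockStart φ x i + (φ (x i)).length := by
  rcases i with n | n
  · have h := blockStart_natCast φ x (n + 1)
    rw [List.sum_range_succ, ← blockStart_natCast] at h
    simpa using h
  · have h := blockStart_neg_natCast φ x (n + 1)
    rw [List.sum_range_succ, neg_add, ← blockStart_neg_natCast] at h
    rw [show Int.negSucc n + 1 = -(n : ℤ) by omega,
      show Int.negSucc n = -((n + 1 : ℕ) : ℤ) by omega, h]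
    push_cast
    ring_nf

lemma blockStart_strictMono (hφ : ∀ a, φ a ≠ []) : StrictMono (blockStart φ x) :=
  strictMono_int_of_lt_succ fun i => by
    rw [blockStart_succ]
    have := List.length_pos_iff.2 (hφ (x i))
    omega

lemma blockStart_add (i : ℤ) (c : ℕ) :
    blockStart φ x (i + c) = blockStart φ x i + ((subwordZ x i c).flatMap φ).length := by
  induction c with
  | zero => simp [subwordZ_eq_map]
  | succ c ih =>
    rw [Nat.cast_succ, ← add_assoc, blockStart_succ, ih, subwordZ_add, List.flatMap_append,
      List.length_append, subwordZ_one, List.flatMap_singleton, Nat.cast_add, add_assoc]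

lemma mem_substPreimage_iff {Γ : Set ℤ} {i : ℤ} :
    i ∈ substPreimage φ x Γ ↔
      ∃ p ∈ Γ, p ∈ Set.Ico (blockStart φ x i) (blockStart φ x (i + 1)) := by
  simp only [substPreimage, Set.mem_ofPred_eq, Set.mem_Ico, blockStart_succ]

variable {φ x} {z : ℤ → B}

lemma occursAt_flatMap_subwordZ (hz : IsSubstImage φ x z) (i : ℤ) (c : ℕ) :
    occursAt z ((subwordZ x i c).flatMap φ) (blockStart φ x i) := by
  induction c with
  | zero => simp [occursAt, subwordZ_eq_map]
  | succ c ih =>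
    rw [subwordZ_add, List.flatMap_append, occursAt_append_iff, ← blockStart_add]
    refine ⟨ih, ?_⟩
    rw [subwordZ_one, List.flatMap_singleton]
    exact hz.2 (i + c)

end Blocks

lemma mem_occSetF_of_prefix {B : Type*} {u v w : List B} (huv : u <+: v) {d : ℕ}
    (hd : d ∈ occSetF u w) : d ∈ occSetF v w := by
  obtain ⟨hlen, htake⟩ := hd
  obtain ⟨t, rfl⟩ := huv
  refine ⟨by rw [List.length_append]; omega, ?_⟩
  rw [List.drop_append_of_le_length (by omega),
    List.take_append_of_le_length (by rw [List.length_drop]; omega), htake]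

namespace IsReturnMorphism

variable {A B : Type*} {φ : A → List B} {w : List B} {x : ℤ → A} {z : ℤ → B}

lemma length_mem_occSetF (hret : IsReturnMorphism φ w) (a : A) :
    (φ a).length ∈ occSetF (w ++ φ a) w := by
  rw [hret.2.2.2 a]
  exact Or.inr rfl

lemma suffix_append (hret : IsReturnMorphism φ w) (a : A) : w <:+ w ++ φ a := by
  obtain ⟨-, h⟩ := hret.length_mem_occSetF a
  rw [List.take_of_length_le (by simp)] at h
  have hsuf := List.drop_suffix (φ a).length (w ++ φ a)
  rwa [h] at hsuf

lemma suffix_append_flatMap (hret : IsReturnMorphism φ w) (u : List A) :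
    w <:+ w ++ u.flatMap φ := by
  induction u with
  | nil => simp
  | cons a u ih =>
    obtain ⟨s, hs⟩ := hret.suffix_append a
    rw [List.flatMap_cons, ← List.append_assoc, ← hs, List.append_assoc]
    exact ih.trans (List.suffix_append _ _)

lemma suffix_flatMap (hret : IsReturnMorphism φ w) {u : List A}
    (h : w.length ≤ (u.flatMap φ).length) : w <:+ u.flatMap φ :=
  List.suffix_of_suffix_length_le (hret.suffix_append_flatMap u) (List.suffix_append _ _) h

lemma eq_of_prefix (hret : IsReturnMorphism φ w) {a b : A} (h : φ a <+: φ b) : a = b := by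
  have hmem : (φ a).length ∈ occSetF (w ++ φ b) w :=
    mem_occSetF_of_prefix ((List.prefix_append_right_inj w).2 h) (hret.length_mem_occSetF a)
  rw [hret.2.2.2 b] at hmem
  rcases hmem with h0 | hlen
  · exact absurd h0 (List.length_pos_iff.2 (hret.2.2.1 a)).ne'
  · exact hret.2.1 (h.eq_of_length hlen)

lemma prefix_of_flatMap_prefix (hret : IsReturnMorphism φ w) {u v : List A}
    (h : u.flatMap φ <+: v.flatMap φ) : u <+: v := by
  induction u generalizing v with
  | nil => exact List.nil_prefix
  | cons a u ih =>
    cases v with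
    | nil =>
      simp only [List.flatMap_cons, List.flatMap_nil, List.prefix_nil, List.append_eq_nil_iff] at h
      exact absurd h.1 (hret.2.2.1 a)
    | cons b v =>
      rw [List.flatMap_cons, List.flatMap_cons] at h
      have hab : a = b := by
        rcases List.prefix_or_prefix_of_prefix ((List.prefix_append _ _).trans h)
            (List.prefix_append _ _) with hab | hba
        · exact hret.eq_of_prefix hab
        · exact (hret.eq_of_prefix hba).symm
      subst hab
      exact List.cons_prefix_cons.2 ⟨rfl, ih ((List.prefix_append_right_inj _).1 h)⟩

lemma occursAt_blockStart_sub (hret : IsReturnMorphism φ w) (hz : IsSubstImage φ x z) (i : ℤ) :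
    occursAt z w (blockStart φ x i - w.length) := by
  set u := subwordZ x (i - w.length) w.length
  have hlen : blockStart φ x i = blockStart φ x (i - w.length) + (u.flatMap φ).length := by
    simpa using blockStart_add φ x (i - w.length) w.length
  have hw : w.length ≤ (u.flatMap φ).length := by
    have := (blockStart_strictMono φ x hz.1).sub_le_sub_apply (sub_le_self i w.length.cast_nonneg)
    omega
  obtain ⟨s, hs⟩ := hret.suffix_flatMap hw
  have hocc := occursAt_flatMap_subwordZ hz (i - w.length) w.length
  rw [← hs, occursAt_append_iff] at hocc
  have hslen := congrArg List.length hs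
  rw [List.length_append] at hslen
  convert hocc.2 using 1
  omega

lemma exists_eq_blockStart_sub (hret : IsReturnMorphism φ w) (hz : IsSubstImage φ x z) {q : ℤ}
    (h : occursAt z w q) : ∃ j, q = blockStart φ x j - w.length := by
  obtain ⟨i, hi₁, hi₂⟩ := (blockStart_strictMono φ x hz.1).exists_mem_Ico_succ (q + w.length)
  rw [blockStart_succ] at hi₂
  have hv : occursAt z (w ++ φ (x i)) (blockStart φ x i - w.length) :=
    occursAt_append_iff.2
      ⟨hret.occursAt_blockStart_sub hz i, by rw [sub_add_cancel]; exact hz.2 i⟩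
  -- `q` is an occurrence of `w` at offset `d < |φ(x_i)|` in `w φ(x_i)`, so `d = 0`
  set d := (q + w.length - blockStart φ x i).toNat
  have hd : d ∈ occSetF (w ++ φ (x i)) w := by
    have hdw : d + w.length ≤ (w ++ φ (x i)).length := by
      rw [List.length_append]
      omega
    refine ⟨hdw, ?_⟩
    rw [hv.drop_take hdw, show blockStart φ x i - w.length + d = q by omega]
    exact h
  rw [hret.2.2.2 (x i), Set.mem_insert_iff, Set.mem_singleton_iff] at hd
  rcases hd with hd | hd
  · exact ⟨i, by omega⟩
  · omega

lemma occursAt_of_occursAt_flatMap (hret : IsReturnMorphism φ w) (hz : IsSubstImage φ x z)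
    {u : List A} {j : ℤ} (h : occursAt z (u.flatMap φ) (blockStart φ x j)) : occursAt x u j := by
  set N := (u.flatMap φ).length
  have hN : N ≤ ((subwordZ x j N).flatMap φ).length := by
    have := (blockStart_strictMono φ x hz.1).sub_le_sub_apply
      (le_add_of_nonneg_right N.cast_nonneg : j ≤ j + N)
    rw [blockStart_add] at this
    omega
  exact occursAt_of_prefix_subwordZ
    (hret.prefix_of_flatMap_prefix (h.prefix_of_length_le (occursAt_flatMap_subwordZ hz j N) hN))

theorem isAttractorZ_thickening_substPreimage (hret : IsReturnMorphism φ w)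
    (hz : IsSubstImage φ x z) {Γ : Set ℤ} (hΓ : IsAttractorZ z Γ) :
    IsAttractorZ x {r | ∃ i ∈ substPreimage φ x Γ, i ≤ r ∧ r ≤ i + w.length} := by
  rintro u hu ⟨i₀, hi₀⟩
  have hb := blockStart_strictMono φ x hz.1
  have hv : occursAt z (w ++ u.flatMap φ) (blockStart φ x i₀ - w.length) := by
    refine occursAt_append_iff.2 ⟨hret.occursAt_blockStart_sub hz i₀, ?_⟩
    rw [sub_add_cancel, ← hi₀]
    exact occursAt_flatMap_subwordZ hz i₀ u.length
  obtain ⟨q, hq, p, hpΓ, hqp, hpq⟩ := hΓ _ (by simp [hret.1]) ⟨_, hv⟩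
  rw [occursAt_append_iff] at hq
  obtain ⟨j, rfl⟩ := hret.exists_eq_blockStart_sub hz hq.1
  rw [sub_add_cancel] at hq
  have huj : occursAt x u j := hret.occursAt_of_occursAt_flatMap hz hq.2
  obtain ⟨ip, hip⟩ := hb.exists_mem_Ico_succ p
  have hend := blockStart_add φ x j u.length
  rw [huj] at hend
  have hpu : p < blockStart φ x (j + u.length) := by
    rw [List.length_append] at hpq
    omega
  have hipu : ip < j + u.length := hb.lt_iff_lt.1 (lt_of_le_of_lt hip.1 hpu)
  have hjip : j ≤ ip + w.length := by
    by_contra hcon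
    have := hb.sub_le_sub_apply (show ip + 1 ≤ j by omega)
    have := hip.2
    omega
  have hu₁ : 1 ≤ u.length := List.length_pos_iff.2 hu
  refine ⟨j, huj, max j ip, ⟨ip, (mem_substPreimage_iff φ x).2 ⟨p, hpΓ, hip⟩, ?_, ?_⟩, ?_, ?_⟩ <;>
    omega

end IsReturnMorphism

lemma substPreimage_Icc {A B : Type*} {φ : A → List B} {x : ℤ → A} (hφ : ∀ a, φ a ≠ [])
    {n N m m' : ℤ} (hnN : n ≤ N) (hm : n ∈ Set.Ico (blockStart φ x m) (blockStart φ x (m + 1)))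
    (hm' : N ∈ Set.Ico (blockStart φ x m') (blockStart φ x (m' + 1))) :
    substPreimage φ x (Set.Icc n N) = Set.Icc m m' := by
  have hb := blockStart_strictMono φ x hφ
  ext i
  rw [mem_substPreimage_iff, Set.mem_Icc]
  constructor
  · rintro ⟨p, ⟨hnp, hpN⟩, hpi₁, hpi₂⟩
    have h₁ := hb.lt_iff_lt.1
      (show blockStart φ x m < blockStart φ x (i + 1) by linarith [hm.1])
    have h₂ := hb.lt_iff_lt.1
      (show blockStart φ x i < blockStart φ x (m' + 1) by linarith [hm'.2])
    omega
  · rintro ⟨hmi, him'⟩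
    have h₁ := hb.monotone him'
    have h₂ := hb.monotone (show m + 1 ≤ i + 1 by omega)
    have h₃ := hb (lt_add_one i)
    exact ⟨max n (blockStart φ x i), ⟨le_max_left _ _, max_le hnN (by linarith [hm'.1])⟩,
      le_max_right _ _, max_lt (by linarith [hm.2]) h₃⟩

/-- For a return morphism `φ` for `w` and an interval string attractor
`Γ = [n, n+k]` of `φ(x)`, the pre-image `φ_x^{-1}(Γ)` is an interval `[m, m+ℓ]` and
`[m, m+ℓ+|w|]` is a string attractor of `x`. -/
theorem preimage_attractor_return_morphism {A B : Type*} (x : ℤ → A) (z : ℤ → B)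
    (φ : A → List B) (w : List B) (hret : IsReturnMorphism φ w)
    (hz : IsSubstImage φ x z) (n : ℤ) (k : ℕ)
    (hΓ : IsAttractorZ z (Set.Icc n (n + (k : ℤ)))) :
    ∃ (m : ℤ) (ℓ : ℕ),
      substPreimage φ x (Set.Icc n (n + (k : ℤ))) = Set.Icc m (m + (ℓ : ℤ)) ∧
      IsAttractorZ x (Set.Icc m (m + (ℓ : ℤ) + (w.length : ℤ))) := by
  have hb := blockStart_strictMono φ x hz.1
  obtain ⟨m, hm⟩ := hb.exists_mem_Ico_succ n
  obtain ⟨m', hm'⟩ := hb.exists_mem_Ico_succ (n + k)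
  have hmm' : m ≤ m' := by
    have := hb.lt_iff_lt.1
      (show blockStart φ x m < blockStart φ x (m' + 1) by linarith [hm.1, hm'.2])
    omega
  have hpre := substPreimage_Icc hz.1 (by omega) hm hm'
  have hℓ : m + ((m' - m).toNat : ℤ) = m' := by omega
  refine ⟨m, (m' - m).toNat, by rw [hpre, hℓ], ?_⟩
  refine (hret.isAttractorZ_thickening_substPreimage hz hΓ).mono ?_
  rintro r ⟨i, hi, hir, hri⟩
  rw [hpre, Set.mem_Icc] at hi
  exact ⟨by omega, by omega⟩
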